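/- arXiv:2206.08760 — 2 statements merged into one kernel-verified Lean document; each statement's English description precedes it below -/
import Mathlib

section
/- Let C = while e do (C₁;…;Cₙ) be a loop of the WHILE language, E its dependency relation, S₁,…,S_k a saturated covering of C, and fix a component S_j. Let B = C₁;…;Cₙ be the loop body of C, let B_j = C_{i₁};…;C_{i_m} (with i₁ < … < i_m enumerating S_j) be the loop body of the split loop C^j, and let V_j = Occ(e) ∪ ⋃_{i∈S_j} Occ(C_i). Then for every natural number p and every state σ: if the p-fold sequential iteration of B starting from σ terminates in a state σ_p, then the p-fold sequential iteration of B_j starting from σ terminates in some state τ_p, the states σ_p and τ_p agree on every variable in V_j, and in particular ⟦e⟧σ_p = ⟦e⟧τ_p. -/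
/-- Variables: a countably infinite set. -/
abbrev Var := ℕ

/-- Values: integers or integer arrays (total functions ℤ → ℤ). -/
inductive Val : Type where
  | int : ℤ → Val
  | arr : (ℤ → ℤ) → Val

/-- Coerce a value to an integer. -/
def Val.toInt : Val → ℤ
  | .int z => z
  | .arr _ => 0

/-- Coerce a value to an array. -/
def Val.toArr : Val → (ℤ → ℤ)
  | .int _ => fun _ => 0
  | .arr a => a

/-- States: total maps from variables to values. -/
abbrev State := Var → Val

/-- Expressions: variables, integer literals, array reads, and
applications of fixed interpreted `n`-ary operators. -/
inductive Expr : Type where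
  | var : Var → Expr
  | lit : ℤ → Expr
  | read : Var → Expr → Expr
  | op : (n : ℕ) → ((Fin n → ℤ) → ℤ) → (Fin n → Expr) → Expr

/-- Evaluation of expressions. -/
def Expr.eval (σ : State) : Expr → Val
  | .var x => σ x
  | .lit z => .int z
  | .read t e => .int ((σ t).toArr ((Expr.eval σ e).toInt))
  | .op n f args => .int (f fun i => (Expr.eval σ (args i)).toInt)

/-- An expression is truthy in a state if it evaluates to a nonzero integer. -/
def Expr.truthy (e : Expr) (σ : State) : Prop := (e.eval σ).toInt ≠ 0

/-- Variables occurring in an expression. -/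
def Expr.occ : Expr → Set Var
  | .var x => {x}
  | .lit _ => ∅
  | .read t e => {t} ∪ Expr.occ e
  | .op n _ args => ⋃ i : Fin n, Expr.occ (args i)

/-- Commands of the WHILE language. -/
inductive Com : Type where
  | assign : Var → Expr → Com
  | store : Var → Expr → Expr → Com          -- t[e₁] := e₂
  | ite : Expr → Com → Com → Com
  | whileDo : Expr → Com → Com
  | use : List Var → Com
  | skip : Com
  | seq : Com → Com → Com

/-- `Out C`: the set of variables modified by `C`. -/
def Com.out : Com → Set Var
  | .assign x _ => {x}
  | .store t _ _ => {t}
  | .ite _ c₁ c₂ => c₁.out ∪ c₂.out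
  | .whileDo _ c => c.out
  | .use _ => ∅
  | .skip => ∅
  | .seq c₁ c₂ => c₁.out ∪ c₂.out

/-- `In C`: the set of variables used by `C`. -/
def Com.inp : Com → Set Var
  | .assign _ e => e.occ
  | .store _ e₁ e₂ => e₁.occ ∪ e₂.occ
  | .ite e c₁ c₂ => e.occ ∪ c₁.inp ∪ c₂.inp
  | .whileDo e c => e.occ ∪ c.inp
  | .use xs => {x | x ∈ xs}
  | .skip => ∅
  | .seq c₁ c₂ => c₁.inp ∪ c₂.inp

/-- `Occ C`: the set of variables occurring in `C`. -/
def Com.occ : Com → Set Var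
  | .assign x e => {x} ∪ e.occ
  | .store t e₁ e₂ => {t} ∪ e₁.occ ∪ e₂.occ
  | .ite e c₁ c₂ => e.occ ∪ c₁.occ ∪ c₂.occ
  | .whileDo e c => e.occ ∪ c.occ
  | .use xs => {x | x ∈ xs}
  | .skip => ∅
  | .seq c₁ c₂ => c₁.occ ∪ c₂.occ

/-- Standard deterministic big-step operational semantics. -/
inductive BigStep : Com → State → State → Prop where
  | assign {x e σ} :
      BigStep (.assign x e) σ (Function.update σ x (e.eval σ))
  | store {t e₁ e₂ σ} :
      BigStep (.store t e₁ e₂) σ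
        (Function.update σ t
          (Val.arr (Function.update (σ t).toArr ((e₁.eval σ).toInt) ((e₂.eval σ).toInt))))
  | iteTrue {e c₁ c₂ σ σ'} : e.truthy σ → BigStep c₁ σ σ' →
      BigStep (.ite e c₁ c₂) σ σ'
  | iteFalse {e c₁ c₂ σ σ'} : ¬ e.truthy σ → BigStep c₂ σ σ' →
      BigStep (.ite e c₁ c₂) σ σ'
  | whileTrue {e c σ σ₁ σ₂} : e.truthy σ → BigStep c σ σ₁ →
      BigStep (.whileDo e c) σ₁ σ₂ → BigStep (.whileDo e c) σ σ₂
  | whileFalse {e c σ} : ¬ e.truthy σ → BigStep (.whileDo e c) σ σ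
  | use {xs σ} : BigStep (.use xs) σ σ
  | skip {σ} : BigStep .skip σ σ
  | seq {c₁ c₂ σ σ₁ σ₂} : BigStep c₁ σ σ₁ → BigStep c₂ σ₁ σ₂ →
      BigStep (.seq c₁ c₂) σ σ₂

/-- Sequential composition of a list of commands. -/
def seqList (l : List Com) : Com := l.foldr Com.seq Com.skip

/-- The body `C_{i₁};…;C_{i_m}` selected by a set `S` of indices,
with `i₁ < … < i_m` enumerating `S`. -/
def selBody {n : ℕ} (body : Fin n → Com) (S : Finset (Fin n)) : Com :=
  seqList ((S.sort (· ≤ ·)).map body)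

/-- The split loop `while e do (C_{i₁};…;C_{i_m})` for a set `S` of indices. -/
def splitLoop {n : ℕ} (e : Expr) (body : Fin n → Com) (S : Finset (Fin n)) : Com :=
  Com.whileDo e (selBody body S)

/-- The dependency relation of the loop `while e do (C₁;…;Cₙ)`:
`Dep e body i j` iff either `i ≠ j` and `Out(C_j) ∩ (In(C_i) ∪ Out(C_i)) ≠ ∅`
(flow and output dependence), or `Out(C_j) ∩ Occ(e) ≠ ∅` (loop-guard correction). -/
def Dep {n : ℕ} (e : Expr) (body : Fin n → Com) (i j : Fin n) : Prop :=
  (i ≠ j ∧ ((body j).out ∩ ((body i).inp ∪ (body i).out)).Nonempty) ∨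
  ((body j).out ∩ e.occ).Nonempty

/-- A saturated covering of the loop `while e do (C₁;…;Cₙ)`:
a finite family of nonempty subsets of `{1,…,n}` covering it,
each closed under the dependency relation. -/
def SaturatedCovering {n k : ℕ} (e : Expr) (body : Fin n → Com)
    (S : Fin k → Finset (Fin n)) : Prop :=
  (∀ j, (S j).Nonempty) ∧ (∀ i, ∃ j, i ∈ S j) ∧
  (∀ j i m, i ∈ S j → Dep e body i m → m ∈ S j)

/-- `p`-fold sequential iteration of a command. -/
def iterate (c : Com) (p : ℕ) : Com := seqList (List.replicate p c)

/-!
Compare the full body with the split body through a simulation on `V_j`: from states agreeing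
on `V_j`, a command `C_i` with `i ∈ S_j` only touches variables of `V_j`, so by the frame property
it runs alike on both sides, while a command with `i ∉ S_j` writes to no variable of `V_j` (closure
of `S_j` under `E` forbids writes to the guard and to any variable of a command in `S_j`), so
skipping it preserves the agreement. Simulations compose sequentially, hence survive `p`-fold
iteration.
-/

theorem Expr.eval_congr {σ τ : State} (e : Expr) (h : Set.EqOn σ τ e.occ) :
    e.eval σ = e.eval τ := by
  induction e with
  | var x => exact h rfl
  | lit z => rfl
  | read t e ih =>
    rw [Expr.eval, Expr.eval, h (Or.inl rfl), ih (h.mono Set.subset_union_right)]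
  | op m f args ih =>
    have hargs : ∀ i, (args i).eval σ = (args i).eval τ := fun i =>
      ih i (h.mono (Set.subset_iUnion (fun i => (args i).occ) i))
    simp only [Expr.eval, hargs]

theorem Expr.truthy_congr {σ τ : State} {e : Expr} (h : Set.EqOn σ τ e.occ) :
    e.truthy σ ↔ e.truthy τ := by
  rw [Expr.truthy, Expr.truthy, e.eval_congr h]

theorem Com.occ_eq_inp_union_out (c : Com) : c.occ = c.inp ∪ c.out := by
  induction c <;> simp only [Com.occ, Com.inp, Com.out, *] <;> ext <;> simp <;> tauto

theorem BigStep.eqOn_compl_out {c : Com} {σ σ' : State} (h : BigStep c σ σ') :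
    Set.EqOn σ' σ c.outᶜ := by
  induction h with
  | assign | store => exact fun x hx => Function.update_of_ne hx _ _
  | iteTrue _ _ ih => exact ih.mono (Set.compl_subset_compl.2 Set.subset_union_left)
  | iteFalse _ _ ih => exact ih.mono (Set.compl_subset_compl.2 Set.subset_union_right)
  | whileTrue _ _ _ ih₁ ih₂ => exact ih₂.trans ih₁
  | whileFalse | use | skip => exact Set.eqOn_refl _ _
  | seq _ _ ih₁ ih₂ =>
    exact (ih₂.mono (Set.compl_subset_compl.2 Set.subset_union_right)).trans
      (ih₁.mono (Set.compl_subset_compl.2 Set.subset_union_left))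

def SimulatesOn (V : Set Var) (c d : Com) : Prop :=
  ∀ ⦃σ σ' τ⦄, BigStep c σ σ' → Set.EqOn σ τ V → ∃ τ', BigStep d τ τ' ∧ Set.EqOn σ' τ' V

namespace SimulatesOn

variable {V : Set Var}

theorem refl_of_occ_subset {c : Com} (hc : c.occ ⊆ V) : SimulatesOn V c c := by
  intro σ σ' τ h hστ
  induction h generalizing τ with
  | @assign x e σ =>
    have he := e.eval_congr (hστ.mono fun y hy => hc (Or.inr hy))
    refine ⟨_, .assign, fun y hy => ?_⟩
    rcases eq_or_ne y x with rfl | hyx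
    · simp [he]
    · simp [Function.update_of_ne hyx, hστ hy]
  | @store t e₁ e₂ σ =>
    have h₁ := e₁.eval_congr (hστ.mono fun y hy => hc (Or.inl (Or.inr hy)))
    have h₂ := e₂.eval_congr (hστ.mono fun y hy => hc (Or.inr hy))
    have ht := hστ (hc (Or.inl (Or.inl rfl)))
    refine ⟨_, .store, fun y hy => ?_⟩
    rcases eq_or_ne y t with rfl | hyt
    · simp [h₁, h₂, ht]
    · simp [Function.update_of_ne hyt, hστ hy]
  | iteTrue he _ ih =>
    have hguard := Expr.truthy_congr (hστ.mono fun y hy => hc (Or.inl (Or.inl hy)))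
    obtain ⟨τ', h', hτ'⟩ := ih (fun y hy => hc (Or.inl (Or.inr hy))) hστ
    exact ⟨τ', .iteTrue (hguard.1 he) h', hτ'⟩
  | iteFalse he _ ih =>
    have hguard := Expr.truthy_congr (hστ.mono fun y hy => hc (Or.inl (Or.inl hy)))
    obtain ⟨τ', h', hτ'⟩ := ih (fun y hy => hc (Or.inr hy)) hστ
    exact ⟨τ', .iteFalse (mt hguard.2 he) h', hτ'⟩
  | whileTrue he _ _ ih₁ ih₂ =>
    have hguard := Expr.truthy_congr (hστ.mono fun y hy => hc (Or.inl hy))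
    obtain ⟨τ₁, h₁, hτ₁⟩ := ih₁ (fun y hy => hc (Or.inr hy)) hστ
    obtain ⟨τ₂, h₂, hτ₂⟩ := ih₂ hc hτ₁
    exact ⟨τ₂, .whileTrue (hguard.1 he) h₁ h₂, hτ₂⟩
  | whileFalse he =>
    have hguard := Expr.truthy_congr (hστ.mono fun y hy => hc (Or.inl hy))
    exact ⟨τ, .whileFalse (mt hguard.2 he), hστ⟩
  | use => exact ⟨τ, .use, hστ⟩
  | skip => exact ⟨τ, .skip, hστ⟩
  | seq _ _ ih₁ ih₂ =>
    obtain ⟨τ₁, h₁, hτ₁⟩ := ih₁ (fun y hy => hc (Or.inl hy)) hστ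
    obtain ⟨τ₂, h₂, hτ₂⟩ := ih₂ (fun y hy => hc (Or.inr hy)) hτ₁
    exact ⟨τ₂, .seq h₁ h₂, hτ₂⟩

theorem seq {c₁ c₂ d₁ d₂ : Com} (h₁ : SimulatesOn V c₁ d₁) (h₂ : SimulatesOn V c₂ d₂) :
    SimulatesOn V (c₁.seq c₂) (d₁.seq d₂) := by
  rintro σ σ' τ (_ | _ | _ | _ | _ | _ | _ | _ | ⟨hc₁, hc₂⟩) hστ
  obtain ⟨τ₁, hd₁, hτ₁⟩ := h₁ hc₁ hστ
  obtain ⟨τ₂, hd₂, hτ₂⟩ := h₂ hc₂ hτ₁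
  exact ⟨τ₂, .seq hd₁ hd₂, hτ₂⟩

theorem seq_left_of_disjoint_out {c₁ c₂ d : Com} (hc₁ : Disjoint c₁.out V)
    (h₂ : SimulatesOn V c₂ d) : SimulatesOn V (c₁.seq c₂) d := by
  rintro σ σ' τ (_ | _ | _ | _ | _ | _ | _ | _ | ⟨h₁, hc₂⟩) hστ
  exact h₂ hc₂ ((h₁.eqOn_compl_out.mono hc₁.subset_compl_left).trans hστ)

theorem seqList_filter {ι : Type*} [DecidableEq ι] (body : ι → Com) (S : Finset ι)
    (hin : ∀ i ∈ S, (body i).occ ⊆ V) (hout : ∀ i ∉ S, Disjoint (body i).out V) (l : List ι) :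
    SimulatesOn V (seqList (l.map body)) (seqList ((l.filter (· ∈ S)).map body)) := by
  induction l with
  | nil => exact refl_of_occ_subset (Set.empty_subset V)
  | cons i l ih =>
    by_cases hi : i ∈ S
    · simpa [List.filter_cons, hi, seqList] using (refl_of_occ_subset (hin i hi)).seq ih
    · simpa [List.filter_cons, hi, seqList] using seq_left_of_disjoint_out (hout i hi) ih

theorem iterate {c d : Com} (h : SimulatesOn V c d) (p : ℕ) :
    SimulatesOn V (iterate c p) (iterate d p) := by
  induction p with
  | zero => exact refl_of_occ_subset (Set.empty_subset V)
  | succ p ih => simpa [_root_.iterate, List.replicate_succ, seqList] using h.seq ih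

end SimulatesOn

theorem Finset.sort_univ_filter_mem {α : Type*} [Fintype α] [LinearOrder α] (s : Finset α) :
    (Finset.univ.sort (· ≤ ·)).filter (· ∈ s) = s.sort (· ≤ ·) :=
  List.Perm.eq_of_pairwise' ((Finset.pairwise_sort _ _).filter _) (Finset.pairwise_sort _ _)
    (List.perm_of_nodup_nodup_toFinset_eq ((Finset.sort_nodup _ _).filter _)
      (Finset.sort_nodup _ _) (by ext; simp))

theorem SaturatedCovering.disjoint_out_of_not_mem {n k : ℕ} {e : Expr} {body : Fin n → Com}
    {S : Fin k → Finset (Fin n)} (hS : SaturatedCovering e body S) (j : Fin k) {m : Fin n}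
    (hm : m ∉ S j) : Disjoint (body m).out (e.occ ∪ ⋃ i ∈ S j, (body i).occ) := by
  obtain ⟨hne, -, hclosed⟩ := hS
  refine Set.disjoint_left.2 fun x hxm hx => ?_
  simp only [Set.mem_union, Set.mem_iUnion₂] at hx
  rcases hx with hguard | ⟨i, hi, hxi⟩
  · obtain ⟨i₀, hi₀⟩ := hne j
    exact hm (hclosed j i₀ m hi₀ (Or.inr ⟨x, hxm, hguard⟩))
  · rw [Com.occ_eq_inp_union_out] at hxi
    exact hm (hclosed j i m hi (Or.inl ⟨ne_of_mem_of_not_mem hi hm, x, hxm, hxi⟩))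

/-- For a component `S_j` of a saturated covering, every `p`-fold
iteration of the full loop body `B` from `σ` that terminates in `σ_p` is matched
by a terminating `p`-fold iteration of the split body `B_j` from `σ` ending in a
state `τ_p` agreeing with `σ_p` on `V_j = Occ(e) ∪ ⋃_{i∈S_j} Occ(C_i)`; in
particular `⟦e⟧σ_p = ⟦e⟧τ_p`. -/
theorem iterated_bodies_agree {n k : ℕ} (e : Expr) (body : Fin n → Com)
    (S : Fin k → Finset (Fin n)) (hS : SaturatedCovering e body S) (j : Fin k)
    (p : ℕ) (σ σp : State)
    (h : BigStep (iterate (selBody body Finset.univ) p) σ σp) :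
    ∃ τp : State,
      BigStep (iterate (selBody body (S j)) p) σ τp ∧
      (∀ x ∈ e.occ ∪ ⋃ i ∈ S j, (body i).occ, σp x = τp x) ∧
      e.eval σp = e.eval τp := by
  set V : Set Var := e.occ ∪ ⋃ i ∈ S j, (body i).occ
  have hin : ∀ i ∈ S j, (body i).occ ⊆ V := fun i hi =>
    (Set.subset_iUnion₂ (s := fun i (_ : i ∈ S j) => (body i).occ) i hi).trans
      Set.subset_union_right
  have hbody : SimulatesOn V (selBody body Finset.univ) (selBody body (S j)) := by
    rw [selBody, selBody, ← Finset.sort_univ_filter_mem (S j)]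
    exact .seqList_filter body (S j) hin (fun m hm => hS.disjoint_out_of_not_mem j hm) _
  obtain ⟨τp, hτp, hagree⟩ := hbody.iterate p h (Set.eqOn_refl σ _)
  exact ⟨τp, hτp, hagree, e.eval_congr (hagree.mono Set.subset_union_left)⟩
end

section
/- Let C = while e do (C₁;…;Cₙ) be a loop of the WHILE language, E its dependency relation, and S₁,…,S_k a saturated covering of C, with split loops C^1,…,C^k. Suppose the execution of C from a state σ terminates. Then for all j, l ∈ {1,…,k}, the executions of C^j and C^l from σ terminate in states σ_j and σ_l, and for every variable x that is modified both by C^j and by C^l (i.e., x ∈ Out(C_i) for some i ∈ S_j and x ∈ Out(C_{i'}) for some i' ∈ S_l), one has σ_j(x) = σ_l(x). Hence running the split loops in parallel on private copies of the state produces no race condition: any two split loops modifying the same variable assign it the same final value. -/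
/-!
Let the footprint `R` of `S` be the set of variables of the guard and of the statements `C_i`,
`i ∈ S`. Closure of `S` under the dependency relation (guard correction for the guard variables,
flow and output dependence for the rest) says that every statement `C_m` with `m ∉ S` writes
outside `R`. Running the full loop and the split loop for `S` side by side, the two states
therefore agree on `R` after every iteration, so the split loop terminates and agrees with the
full loop on every variable it modifies. Two split loops modifying a common variable both agree
with the full loop on it.
-/

theorem Set.EqOn.update {α β : Type*} [DecidableEq α] {f g : α → β} {s : Set α}
    (h : Set.EqOn f g s) (a : α) (b : β) :
    Set.EqOn (Function.update f a b) (Function.update g a b) s := by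
  intro x hx
  rcases eq_or_ne x a with rfl | hxa
  · simp
  · simp [Function.update_of_ne hxa, h hx]

theorem Finset.sort_filter_mem {α : Type*} [LinearOrder α] {S T : Finset α} (hST : S ⊆ T) :
    (T.sort (· ≤ ·)).filter (· ∈ S) = S.sort (· ≤ ·) := by
  refine List.Perm.eq_of_pairwise' ((Finset.pairwise_sort _ _).filter _)
    (Finset.pairwise_sort _ _) ?_
  rw [List.perm_ext_iff_of_nodup ((Finset.sort_nodup _ _).filter _) (Finset.sort_nodup _ _)]
  intro a
  simpa [Finset.mem_sort] using fun ha => hST ha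

namespace Expr

theorem eval_congr_s5 {σ τ : State} (e : Expr) (h : Set.EqOn σ τ e.occ) : e.eval σ = e.eval τ := by
  induction e with
  | var x => exact h rfl
  | lit z => rfl
  | read t e ih =>
    rw [occ, Set.eqOn_union, Set.eqOn_singleton] at h
    simp only [eval, h.1, ih h.2]
  | op m f args ih =>
    simp only [eval]
    congr 2
    funext i
    rw [ih i (h.mono (Set.subset_iUnion (fun i => (args i).occ) i))]

theorem truthy_congr_s5 {σ τ : State} {e : Expr} (h : Set.EqOn σ τ e.occ) :
    e.truthy σ ↔ e.truthy τ := by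
  rw [truthy, truthy, eval_congr_s5 e h]

end Expr

namespace BigStep

theorem eqOn_compl_out_s5 {c : Com} {σ σ' : State} (h : BigStep c σ σ') :
    Set.EqOn σ' σ c.outᶜ := by
  induction h with
  | assign | store => exact fun x hx => Function.update_of_ne hx _ _
  | iteTrue _ _ ih => exact ih.mono (Set.compl_subset_compl.2 Set.subset_union_left)
  | iteFalse _ _ ih => exact ih.mono (Set.compl_subset_compl.2 Set.subset_union_right)
  | whileTrue _ _ _ ih₁ ih₂ => exact ih₂.trans ih₁
  | whileFalse _ | use | skip => exact Set.eqOn_refl _ _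
  | seq _ _ ih₁ ih₂ =>
    exact (ih₂.mono (Set.compl_subset_compl.2 Set.subset_union_right)).trans
      (ih₁.mono (Set.compl_subset_compl.2 Set.subset_union_left))

theorem exists_eqOn_of_eqOn {c : Com} {σ σ' τ : State} {A : Set Var} (h : BigStep c σ σ')
    (hA : c.inp ∪ c.out ⊆ A) (hστ : Set.EqOn σ τ A) :
    ∃ τ', BigStep c τ τ' ∧ Set.EqOn σ' τ' A := by
  induction h generalizing τ with
  | @assign x e σ =>
    simp only [Com.inp, Com.out, Set.union_subset_iff] at hA
    refine ⟨_, .assign, ?_⟩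
    rw [Expr.eval_congr_s5 e (hστ.mono hA.1)]
    exact hστ.update x _
  | @store t e₁ e₂ σ =>
    simp only [Com.inp, Com.out, Set.union_subset_iff, Set.singleton_subset_iff] at hA
    refine ⟨_, .store, ?_⟩
    rw [Expr.eval_congr_s5 e₁ (hστ.mono hA.1.1), Expr.eval_congr_s5 e₂ (hστ.mono hA.1.2), hστ hA.2]
    exact hστ.update t _
  | iteTrue hguard _ ih =>
    simp only [Com.inp, Com.out, Set.union_subset_iff] at hA
    obtain ⟨τ', hτ', hστ'⟩ := ih (Set.union_subset hA.1.1.2 hA.2.1) hστ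
    exact ⟨τ', .iteTrue ((Expr.truthy_congr_s5 (hστ.mono hA.1.1.1)).1 hguard) hτ', hστ'⟩
  | iteFalse hguard _ ih =>
    simp only [Com.inp, Com.out, Set.union_subset_iff] at hA
    obtain ⟨τ', hτ', hστ'⟩ := ih (Set.union_subset hA.1.2 hA.2.2) hστ
    exact ⟨τ', .iteFalse (mt (Expr.truthy_congr_s5 (hστ.mono hA.1.1.1)).2 hguard) hτ', hστ'⟩
  | whileTrue hguard _ _ ih₁ ih₂ =>
    have hA' := hA
    simp only [Com.inp, Com.out, Set.union_subset_iff] at hA'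
    obtain ⟨τ₁, hτ₁, hστ₁⟩ := ih₁ (Set.union_subset hA'.1.2 hA'.2) hστ
    obtain ⟨τ', hτ', hστ'⟩ := ih₂ hA hστ₁
    exact ⟨τ', .whileTrue ((Expr.truthy_congr_s5 (hστ.mono hA'.1.1)).1 hguard) hτ₁ hτ', hστ'⟩
  | whileFalse hguard =>
    simp only [Com.inp, Com.out, Set.union_subset_iff] at hA
    exact ⟨τ, .whileFalse (mt (Expr.truthy_congr_s5 (hστ.mono hA.1.1)).2 hguard), hστ⟩
  | use => exact ⟨τ, .use, hστ⟩
  | skip => exact ⟨τ, .skip, hστ⟩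
  | seq _ _ ih₁ ih₂ =>
    simp only [Com.inp, Com.out, Set.union_subset_iff] at hA
    obtain ⟨τ₁, hτ₁, hστ₁⟩ := ih₁ (Set.union_subset hA.1.1 hA.2.1) hστ
    obtain ⟨τ', hτ', hστ'⟩ := ih₂ (Set.union_subset hA.1.2 hA.2.2) hστ₁
    exact ⟨τ', .seq hτ₁ hτ', hστ'⟩

section Filter

variable {ι : Type*} {body : ι → Com} {p : ι → Prop} [DecidablePred p] {R : Set Var}

theorem exists_seqList_filter (hkeep : ∀ i, p i → (body i).inp ∪ (body i).out ⊆ R)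
    (hdrop : ∀ i, ¬ p i → Disjoint (body i).out R) {L : List ι} {σ σ' τ : State}
    (h : BigStep (seqList (L.map body)) σ σ') (hστ : Set.EqOn σ τ R) :
    ∃ τ', BigStep (seqList ((L.filter p).map body)) τ τ' ∧ Set.EqOn σ' τ' R := by
  induction L generalizing σ τ with
  | nil => cases h; exact ⟨τ, .skip, hστ⟩
  | cons i L ih =>
    obtain ⟨σ₁, h₁, h₂⟩ : ∃ σ₁, BigStep (body i) σ σ₁ ∧ BigStep (seqList (L.map body)) σ₁ σ' := by
      cases h; exact ⟨_, ‹_›, ‹_›⟩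
    by_cases hi : p i
    · obtain ⟨τ₁, hτ₁, hστ₁⟩ := h₁.exists_eqOn_of_eqOn (hkeep i hi) hστ
      obtain ⟨τ', hτ', hστ'⟩ := ih h₂ hστ₁
      rw [List.filter_cons_of_pos (by simpa using hi)]
      exact ⟨τ', .seq hτ₁ hτ', hστ'⟩
    · rw [List.filter_cons_of_neg (by simpa using hi)]
      exact ih h₂ ((h₁.eqOn_compl_out_s5.mono (hdrop i hi).subset_compl_left).trans hστ)

theorem exists_whileDo_filter {e : Expr} (he : e.occ ⊆ R)
    (hkeep : ∀ i, p i → (body i).inp ∪ (body i).out ⊆ R)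
    (hdrop : ∀ i, ¬ p i → Disjoint (body i).out R) {L : List ι} {σ σ' τ : State}
    (h : BigStep (.whileDo e (seqList (L.map body))) σ σ') (hστ : Set.EqOn σ τ R) :
    ∃ τ', BigStep (.whileDo e (seqList ((L.filter p).map body))) τ τ' ∧ Set.EqOn σ' τ' R := by
  generalize hc : Com.whileDo e (seqList (L.map body)) = c at h
  induction h generalizing τ with
  | whileTrue hguard hbody _ _ ih =>
    cases hc
    obtain ⟨τ₁, hτ₁, hστ₁⟩ := exists_seqList_filter hkeep hdrop hbody hστ
    obtain ⟨τ', hτ', hστ'⟩ := ih hστ₁ rfl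
    exact ⟨τ', .whileTrue ((Expr.truthy_congr_s5 (hστ.mono he)).1 hguard) hτ₁ hτ', hστ'⟩
  | whileFalse hguard =>
    cases hc
    exact ⟨τ, .whileFalse (mt (Expr.truthy_congr_s5 (hστ.mono he)).2 hguard), hστ⟩
  | _ => cases hc

end Filter

end BigStep

def footprint {n : ℕ} (e : Expr) (body : Fin n → Com) (S : Finset (Fin n)) : Set Var :=
  e.occ ∪ ⋃ i ∈ S, ((body i).inp ∪ (body i).out)

section SplitLoop

variable {n : ℕ} {e : Expr} {body : Fin n → Com} {S : Finset (Fin n)}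

theorem disjoint_out_footprint_of_notMem (hne : S.Nonempty)
    (hclosed : ∀ i m, i ∈ S → Dep e body i m → m ∈ S) {m : Fin n} (hm : m ∉ S) :
    Disjoint (body m).out (footprint e body S) := by
  rw [Set.disjoint_left]
  rintro x hxm (hxe | hxS)
  · obtain ⟨i, hi⟩ := hne
    exact hm (hclosed i m hi (.inr ⟨x, hxm, hxe⟩))
  · obtain ⟨i, hi, hx⟩ := Set.mem_iUnion₂.1 hxS
    exact hm (hclosed i m hi (.inl ⟨fun him => hm (him ▸ hi), x, hxm, hx⟩))

theorem BigStep.exists_splitLoop (hne : S.Nonempty)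
    (hclosed : ∀ i m, i ∈ S → Dep e body i m → m ∈ S) {σ σ' : State}
    (h : BigStep (splitLoop e body Finset.univ) σ σ') :
    ∃ σS, BigStep (splitLoop e body S) σ σS ∧ ∀ i ∈ S, Set.EqOn σ' σS (body i).out := by
  have hkeep : ∀ i ∈ S, (body i).inp ∪ (body i).out ⊆ footprint e body S := fun i hi =>
    (Set.subset_biUnion_of_mem (u := fun i => (body i).inp ∪ (body i).out) hi).trans
      Set.subset_union_right
  obtain ⟨σS, hσS, hσ'σS⟩ := BigStep.exists_whileDo_filter (p := (· ∈ S))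
    (L := Finset.univ.sort (· ≤ ·)) Set.subset_union_left hkeep
    (fun m hm => disjoint_out_footprint_of_notMem hne hclosed hm) h (Set.eqOn_refl σ _)
  rw [Finset.sort_filter_mem (Finset.subset_univ S)] at hσS
  exact ⟨σS, hσS, fun i hi => hσ'σS.mono (Set.subset_union_right.trans (hkeep i hi))⟩

end SplitLoop

/-- If the loop terminates from `σ`, then any two split loops
`C^j`, `C^l` terminate from `σ` in states `σ_j`, `σ_l` which agree on every
variable modified by both: no race condition arises. -/
theorem split_loops_no_race {n k : ℕ} (e : Expr) (body : Fin n → Com)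
    (S : Fin k → Finset (Fin n)) (hS : SaturatedCovering e body S)
    (σ : State) (h : ∃ σ', BigStep (splitLoop e body Finset.univ) σ σ') :
    ∀ j l : Fin k, ∃ σj σl : State,
      BigStep (splitLoop e body (S j)) σ σj ∧
      BigStep (splitLoop e body (S l)) σ σl ∧
      ∀ x : Var, (∃ i ∈ S j, x ∈ (body i).out) →
        (∃ i' ∈ S l, x ∈ (body i').out) → σj x = σl x := by
  obtain ⟨σ', hC⟩ := h
  obtain ⟨hne, -, hclosed⟩ := hS
  intro j l
  obtain ⟨σj, hj, hσj⟩ := hC.exists_splitLoop (hne j) (hclosed j)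
  obtain ⟨σl, hl, hσl⟩ := hC.exists_splitLoop (hne l) (hclosed l)
  refine ⟨σj, σl, hj, hl, ?_⟩
  rintro x ⟨i, hi, hx⟩ ⟨i', hi', hx'⟩
  exact (hσj i hi hx).symm.trans (hσl i' hi' hx')
end
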